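/- arXiv:1412.6500 — 4 statements merged into one kernel-verified Lean document; each statement's English description precedes it below -/
import Mathlib

section
/- Let g₁, g₂ ∈ H, and for j = 1, 2 let u_j ∈ K satisfy a(u_j, v − u_j) ≥ ⟨g_j, i(v − u_j)⟩_H − q(v − u_j) for all v ∈ K. Then ‖u₂ − u₁‖_V ≤ (1/λ)·‖g₂ − g₁‖_H. -/
open RealInnerProductSpace

/-- Lemma 2.1(b) (abstract form): the solution of the variational inequality
depends Lipschitz-continuously on the data `g`, with constant `1/λ`:
`‖u₂ - u₁‖_V ≤ (1/λ)·‖g₂ - g₁‖_H`. -/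
theorem solution_EVI_lipschitz_dependence
    {V H : Type*}
    [NormedAddCommGroup V] [InnerProductSpace ℝ V] [CompleteSpace V]
    [NormedAddCommGroup H] [InnerProductSpace ℝ H] [CompleteSpace H]
    (i : V →L[ℝ] H) (hi : ‖i‖ ≤ 1)
    (a : V →L[ℝ] V →L[ℝ] ℝ) (ha_symm : ∀ u v : V, a u v = a v u)
    (V₀ : Submodule ℝ V) (hV₀ : IsClosed (V₀ : Set V))
    (lam : ℝ) (hlam : 0 < lam) (hcoer : ∀ v ∈ V₀, lam * ‖v‖ ^ 2 ≤ a v v)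
    (K : Set V) (hKne : K.Nonempty) (hKcl : IsClosed K) (hKconv : Convex ℝ K)
    (hKdiff : ∀ x ∈ K, ∀ y ∈ K, x - y ∈ V₀)
    (q : V →L[ℝ] ℝ)
    (g₁ g₂ : H) (u₁ u₂ : V) (hu₁ : u₁ ∈ K) (hu₂ : u₂ ∈ K)
    (hVI₁ : ∀ v ∈ K, ⟪g₁, i (v - u₁)⟫ - q (v - u₁) ≤ a u₁ (v - u₁))
    (hVI₂ : ∀ v ∈ K, ⟪g₂, i (v - u₂)⟫ - q (v - u₂) ≤ a u₂ (v - u₂)) :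
    ‖u₂ - u₁‖ ≤ (1 / lam) * ‖g₂ - g₁‖ := by

  set w := u₂ - u₁ with hw
  have h1 := hVI₁ u₂ hu₂
  have h2 := hVI₂ u₁ hu₁
  have hneg : u₁ - u₂ = -w := by simp [hw]
  have key : a w w ≤ ⟪g₂ - g₁, i w⟫ := by
    have e1 : a u₂ w - a u₁ w = a w w := by
      have := ha_symm u₂ w
      have := ha_symm u₁ w
      simp [hw, map_sub, ContinuousLinearMap.sub_apply, ha_symm u₂ (u₂ - u₁),
        ha_symm u₁ (u₂ - u₁)]
    rw [hneg] at h2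
    simp only [map_neg, inner_neg_right] at h2
    have h2' : a u₂ w ≤ ⟪g₂, i w⟫ - q w := by linarith
    have h1' : ⟪g₁, i w⟫ - q w ≤ a u₁ w := h1
    have : a u₂ w - a u₁ w ≤ ⟪g₂, i w⟫ - ⟪g₁, i w⟫ := by linarith
    rw [e1] at this
    rwa [inner_sub_left]
  have hw0 : w ∈ V₀ := hKdiff u₂ hu₂ u₁ hu₁
  have hco := hcoer w hw0
  have hbound : ⟪g₂ - g₁, i w⟫ ≤ ‖g₂ - g₁‖ * ‖w‖ := by
    calc ⟪g₂ - g₁, i w⟫ ≤ ‖g₂ - g₁‖ * ‖i w‖ := real_inner_le_norm _ _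
      _ ≤ ‖g₂ - g₁‖ * ‖w‖ := by
          have := i.le_opNorm w
          have : ‖i w‖ ≤ ‖w‖ := le_trans this (by nlinarith [norm_nonneg w])
          exact mul_le_mul_of_nonneg_left this (norm_nonneg _)
  have hmain : lam * ‖w‖ ^ 2 ≤ ‖g₂ - g₁‖ * ‖w‖ := by linarith
  rcases eq_or_lt_of_le (norm_nonneg w) with h0 | h0
  · rw [← h0]
    positivity
  · rw [div_mul_eq_mul_div, le_div_iff₀ hlam]
    nlinarith
end

section
/- Let (K_n) be a sequence of nonempty closed convex subsets of K such that (i) there exists w ∈ V with w ∈ K_n for every n, and (ii) for every v ∈ K there exist v_n ∈ K_n with v_n → v strongly in V. Let u_n ∈ K_n satisfy a(u_n, v − u_n) ≥ L(v − u_n) for all v ∈ K_n, and let u ∈ K satisfy a(u, v − u) ≥ L(v − u) for all v ∈ K. Then u_n converges to u strongly in V. -/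
open Filter

/-- Theorem 2.2 (abstract form): if `Kₙ ⊆ K` are nonempty closed convex sets
containing a common element `w` and approximating `K` (every `v ∈ K` is the
strong limit of elements `vₙ ∈ Kₙ`), and if `uₙ ∈ Kₙ`, `u ∈ K` solve the
variational inequalities on `Kₙ` and `K` respectively, then `uₙ → u` strongly
in `V`. -/
theorem solution_EVI_approx_convex_sets_convergence
    {V : Type*} [NormedAddCommGroup V] [InnerProductSpace ℝ V] [CompleteSpace V]
    (a : V →L[ℝ] V →L[ℝ] ℝ) (ha_symm : ∀ u v : V, a u v = a v u)
    (V₀ : Submodule ℝ V) (hV₀ : IsClosed (V₀ : Set V))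
    (lam : ℝ) (hlam : 0 < lam) (hcoer : ∀ v ∈ V₀, lam * ‖v‖ ^ 2 ≤ a v v)
    (K : Set V) (hKne : K.Nonempty) (hKcl : IsClosed K) (hKconv : Convex ℝ K)
    (hKdiff : ∀ x ∈ K, ∀ y ∈ K, x - y ∈ V₀)
    (L : V →L[ℝ] ℝ)
    (Kn : ℕ → Set V)
    (hKn : ∀ n, (Kn n).Nonempty ∧ IsClosed (Kn n) ∧ Convex ℝ (Kn n) ∧ Kn n ⊆ K)
    (w : V) (hw : ∀ n, w ∈ Kn n)
    (happrox : ∀ v ∈ K, ∃ vn : ℕ → V, (∀ n, vn n ∈ Kn n) ∧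
      Tendsto vn atTop (nhds v))
    (un : ℕ → V) (hun : ∀ n, un n ∈ Kn n)
    (hVIn : ∀ n, ∀ v ∈ Kn n, L (v - un n) ≤ a (un n) (v - un n))
    (u : V) (hu : u ∈ K)
    (hVI : ∀ v ∈ K, L (v - u) ≤ a u (v - u)) :
    Tendsto un atTop (nhds u) := by
  obtain ⟨vn, hvn, hvn_lim⟩ := happrox u hu
  have hunK : ∀ n, un n ∈ K := fun n => (hKn n).2.2.2 (hun n)
  have hwK : w ∈ K := (hKn 0).2.2.2 (hw 0)
  -- uniform bound on ‖un n‖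
  set M : ℝ := (‖L‖ + ‖a‖ * ‖w‖) / lam + ‖w‖ with hM
  have hC1 : (0:ℝ) ≤ ‖L‖ + ‖a‖ * ‖w‖ := by positivity
  have hbound : ∀ n, ‖un n‖ ≤ M := by
    intro n
    set d : ℝ := ‖un n - w‖ with hd
    have hmem : un n - w ∈ V₀ := hKdiff _ (hunK n) _ hwK
    have h1 : lam * d ^ 2 ≤ a (un n - w) (un n - w) := hcoer _ hmem
    have h2 : L (w - un n) ≤ a (un n) (w - un n) := hVIn n w (hw n)
    have h3 : a (un n) (un n - w) ≤ L (un n - w) := by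
      have e1 : w - un n = -(un n - w) := by abel
      rw [e1, map_neg, map_neg] at h2
      linarith
    have e2 : a (un n - w) (un n - w) = a (un n) (un n - w) - a w (un n - w) := by
      simp only [map_sub, ContinuousLinearMap.sub_apply]
      ring
    have h4 : |L (un n - w)| ≤ ‖L‖ * d := by
      calc |L (un n - w)| = ‖L (un n - w)‖ := rfl
        _ ≤ ‖L‖ * ‖un n - w‖ := L.le_opNorm _
    have h5 : |a w (un n - w)| ≤ ‖a‖ * ‖w‖ * d := by
      calc |a w (un n - w)| = ‖a w (un n - w)‖ := rfl
        _ ≤ ‖a‖ * ‖w‖ * ‖un n - w‖ := a.le_opNorm₂ _ _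
    have h6 : lam * d ^ 2 ≤ (‖L‖ + ‖a‖ * ‖w‖) * d := by
      have := abs_le.mp h4
      have := abs_le.mp h5
      nlinarith
    have hdnn : (0:ℝ) ≤ d := norm_nonneg _
    have h7 : d ≤ (‖L‖ + ‖a‖ * ‖w‖) / lam := by
      rcases eq_or_lt_of_le hdnn with h | h
      · rw [← h]; positivity
      · rw [le_div_iff₀ hlam]
        nlinarith [mul_pos h h]
    have h8 : ‖un n‖ ≤ d + ‖w‖ := by
      calc ‖un n‖ = ‖(un n - w) + w‖ := by rw [sub_add_cancel]
        _ ≤ ‖un n - w‖ + ‖w‖ := norm_add_le _ _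
    rw [hM]; linarith
  have hMnn : (0:ℝ) ≤ M := le_trans (norm_nonneg _) (hbound 0)
  set B : ℝ := ‖L‖ + ‖a‖ * M with hB
  have hBnn : (0:ℝ) ≤ B := by positivity
  -- key estimate
  have hkey : ∀ n, lam * ‖un n - u‖ ^ 2 ≤ B * ‖vn n - u‖ := by
    intro n
    have hmem : un n - u ∈ V₀ := hKdiff _ (hunK n) _ hu
    have h1 : lam * ‖un n - u‖ ^ 2 ≤ a (un n - u) (un n - u) := hcoer _ hmem
    have h2 : L (vn n - un n) ≤ a (un n) (vn n - un n) := hVIn n (vn n) (hvn n)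
    have h3 : a (un n) (un n - vn n) ≤ L (un n - vn n) := by
      have e1 : vn n - un n = -(un n - vn n) := by abel
      rw [e1, map_neg, map_neg] at h2
      linarith
    have h4 : L (un n - u) ≤ a u (un n - u) := hVI _ (hunK n)
    have e2 : a (un n - u) (un n - u) = a (un n) (un n - u) - a u (un n - u) := by
      simp only [map_sub, ContinuousLinearMap.sub_apply]
      ring
    have e3 : a (un n) (un n - u)
        = a (un n) (un n - vn n) + a (un n) (vn n - u) := by
      have : (un n - u) = (un n - vn n) + (vn n - u) := by abel
      rw [this, map_add]
    have h5 : |L (u - vn n)| ≤ ‖L‖ * ‖vn n - u‖ := by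
      calc |L (u - vn n)| = ‖L (u - vn n)‖ := rfl
        _ ≤ ‖L‖ * ‖u - vn n‖ := L.le_opNorm _
        _ = ‖L‖ * ‖vn n - u‖ := by rw [norm_sub_rev]
    have h6 : |a (un n) (vn n - u)| ≤ ‖a‖ * M * ‖vn n - u‖ := by
      calc |a (un n) (vn n - u)| = ‖a (un n) (vn n - u)‖ := rfl
        _ ≤ ‖a‖ * ‖un n‖ * ‖vn n - u‖ := a.le_opNorm₂ _ _
        _ ≤ ‖a‖ * M * ‖vn n - u‖ := by
            gcongr
            exact hbound n
    have e4 : L (un n - vn n) - L (un n - u) = L (u - vn n) := by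
      rw [map_sub, map_sub, map_sub]; ring
    have := abs_le.mp h5
    have := abs_le.mp h6
    rw [hB]; nlinarith
  -- conclude
  have hεlim : Tendsto (fun n => ‖vn n - u‖) atTop (nhds 0) :=
    tendsto_iff_norm_sub_tendsto_zero.mp hvn_lim
  have hsq : Tendsto (fun n => ‖un n - u‖ ^ 2) atTop (nhds 0) := by
    apply squeeze_zero (fun n => sq_nonneg _) (g := fun n => (B / lam) * ‖vn n - u‖)
    · intro n
      have := hkey n
      rw [div_mul_eq_mul_div, le_div_iff₀ hlam]
      nlinarith
    · simpa using hεlim.const_mul (B / lam)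
  have hnorm : Tendsto (fun n => ‖un n - u‖) atTop (nhds 0) := by
    have h := (Real.continuous_sqrt.tendsto 0).comp hsq
    have e : (fun n => ‖un n - u‖)
        = (fun x => Real.sqrt x) ∘ (fun n => ‖un n - u‖ ^ 2) := by
      funext n
      simp [Real.sqrt_sq (norm_nonneg _)]
    rw [e]
    simpa using h
  exact tendsto_iff_norm_sub_tendsto_zero.mpr hnorm
end

section
/- Let K' ⊆ K be a nonempty closed convex set, let u ∈ K satisfy a(u, v − u) ≥ L(v − u) for all v ∈ K, and let u' ∈ K' satisfy a(u', v − u') ≥ L(v − u') for all v ∈ K'. Then for every w ∈ K': λ‖u' − u‖²_V ≤ (‖a‖·‖u'‖_V + ‖L‖)·‖w − u‖_V. In particular, if there are constants c > 0, h > 0 and r ∈ (1, 2] with some w ∈ K' satisfying ‖w − u‖_V ≤ c·h^{r−1}, then ‖u' − u‖_V ≤ C·h^{(r−1)/2} with C depending only on λ, ‖a‖, ‖u'‖_V, ‖L‖ and c. -/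
/-- Lemma 3.1(a) (abstract form): if `u ∈ K` solves the variational inequality
on `K` and `u' ∈ K' ⊆ K` solves it on `K'`, then for every `w ∈ K'`,
`λ‖u' - u‖² ≤ (‖a‖·‖u'‖ + ‖L‖)·‖w - u‖`. In particular, if some `w ∈ K'`
satisfies `‖w - u‖ ≤ c·h^(r-1)` with `c, h > 0` and `1 < r ≤ 2`, then
`‖u' - u‖ ≤ C·h^((r-1)/2)` with `C = √((‖a‖·‖u'‖ + ‖L‖)·c/λ)` depending only on
`λ`, `‖a‖`, `‖u'‖`, `‖L‖` and `c`. -/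
theorem solution_EVI_error_estimate
    {V : Type*} [NormedAddCommGroup V] [InnerProductSpace ℝ V] [CompleteSpace V]
    (a : V →L[ℝ] V →L[ℝ] ℝ) (ha_symm : ∀ u v : V, a u v = a v u)
    (V₀ : Submodule ℝ V) (hV₀ : IsClosed (V₀ : Set V))
    (lam : ℝ) (hlam : 0 < lam) (hcoer : ∀ v ∈ V₀, lam * ‖v‖ ^ 2 ≤ a v v)
    (K : Set V) (hKne : K.Nonempty) (hKcl : IsClosed K) (hKconv : Convex ℝ K)
    (hKdiff : ∀ x ∈ K, ∀ y ∈ K, x - y ∈ V₀)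
    (L : V →L[ℝ] ℝ)
    (K' : Set V) (hK'ne : K'.Nonempty) (hK'cl : IsClosed K')
    (hK'conv : Convex ℝ K') (hK'sub : K' ⊆ K)
    (u : V) (hu : u ∈ K) (hVI : ∀ v ∈ K, L (v - u) ≤ a u (v - u))
    (u' : V) (hu' : u' ∈ K') (hVI' : ∀ v ∈ K', L (v - u') ≤ a u' (v - u')) :
    (∀ w ∈ K', lam * ‖u' - u‖ ^ 2 ≤ (‖a‖ * ‖u'‖ + ‖L‖) * ‖w - u‖) ∧
    (∀ c h r : ℝ, 0 < c → 0 < h → 1 < r → r ≤ 2 →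
      (∃ w ∈ K', ‖w - u‖ ≤ c * h ^ (r - 1)) →
      ‖u' - u‖ ≤ Real.sqrt ((‖a‖ * ‖u'‖ + ‖L‖) * c / lam) * h ^ ((r - 1) / 2)) := by
  have hM : 0 ≤ ‖a‖ * ‖u'‖ + ‖L‖ := by positivity
  have key : ∀ w ∈ K', lam * ‖u' - u‖ ^ 2 ≤ (‖a‖ * ‖u'‖ + ‖L‖) * ‖w - u‖ := by
    intro w hw
    have h1 : L (u' - u) ≤ a u (u' - u) := hVI u' (hK'sub hu')
    have h2 : L (w - u') ≤ a u' (w - u') := hVI' w hw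
    have hco : lam * ‖u' - u‖ ^ 2 ≤ a (u' - u) (u' - u) :=
      hcoer _ (hKdiff u' (hK'sub hu') u hu)
    have hsplit : a (u' - u) (u' - u)
        = a u' (w - u) - a u' (w - u') - a u (u' - u) := by
      simp only [map_sub, ContinuousLinearMap.sub_apply]
      ring
    have hL : L (w - u) = L (w - u') + L (u' - u) := by
      rw [← map_add]; congr 1; abel
    have step : a (u' - u) (u' - u) ≤ a u' (w - u) - L (w - u) := by
      rw [hsplit, hL]; linarith
    have hb1 : a u' (w - u) ≤ ‖a‖ * ‖u'‖ * ‖w - u‖ := by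
      calc a u' (w - u) ≤ ‖a u' (w - u)‖ := le_abs_self _
        _ ≤ ‖a u'‖ * ‖w - u‖ := (a u').le_opNorm _
        _ ≤ ‖a‖ * ‖u'‖ * ‖w - u‖ := by
            gcongr; exact a.le_opNorm u'
    have hb2 : -L (w - u) ≤ ‖L‖ * ‖w - u‖ := by
      have hop := L.le_opNorm (w - u)
      rw [Real.norm_eq_abs] at hop
      linarith [neg_abs_le (L (w - u))]
    calc lam * ‖u' - u‖ ^ 2 ≤ a u' (w - u) - L (w - u) := le_trans hco step
      _ ≤ ‖a‖ * ‖u'‖ * ‖w - u‖ + ‖L‖ * ‖w - u‖ := by linarith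
      _ = (‖a‖ * ‖u'‖ + ‖L‖) * ‖w - u‖ := by ring
  refine ⟨key, ?_⟩
  intro c h r hc hh hr1 hr2 ⟨w, hw, hwu⟩
  have h1 := key w hw
  set M := ‖a‖ * ‖u'‖ + ‖L‖ with hMdef
  have hhr : (0:ℝ) ≤ h ^ (r - 1) := Real.rpow_nonneg hh.le _
  have h2 : lam * ‖u' - u‖ ^ 2 ≤ M * (c * h ^ (r - 1)) := by
    refine h1.trans ?_
    exact mul_le_mul_of_nonneg_left hwu hM
  have h3 : ‖u' - u‖ ^ 2 ≤ (M * c / lam) * h ^ (r - 1) := by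
    rw [div_mul_eq_mul_div, le_div_iff₀ hlam]
    nlinarith
  have h4 : ‖u' - u‖ ≤ Real.sqrt ((M * c / lam) * h ^ (r - 1)) := by
    have := Real.sqrt_le_sqrt h3
    rwa [Real.sqrt_sq (norm_nonneg _)] at this
  refine h4.trans_eq ?_
  rw [Real.sqrt_mul (by positivity), show (r-1)/2 = (r-1) * (1/2) by ring,
    Real.rpow_mul hh.le]
  simp [Real.sqrt_eq_rpow]
end

section
/- Assume that for all g₁, g₂ ∈ H and all μ ∈ [0,1] one has ‖i(u_{μg₁+(1−μ)g₂})‖_H ≤ ‖μ·i(u_{g₁}) + (1−μ)·i(u_{g₂})‖_H. Then J is strictly convex on H: for all g₁ ≠ g₂ in H and all μ ∈ (0,1), J(μ·g₁ + (1−μ)·g₂) < μ·J(g₁) + (1−μ)·J(g₂). Consequently the minimizer of J over H is unique. -/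
open RealInnerProductSpace

private lemma norm_sq_combo_identity {E : Type*} [NormedAddCommGroup E]
    [InnerProductSpace ℝ E] (a b : E) (μ : ℝ) :
    μ * ‖a‖ ^ 2 + (1 - μ) * ‖b‖ ^ 2 - ‖μ • a + (1 - μ) • b‖ ^ 2
      = μ * (1 - μ) * ‖a - b‖ ^ 2 := by
  have h1 : ‖μ • a + (1 - μ) • b‖ ^ 2 = ⟪μ • a + (1 - μ) • b, μ • a + (1 - μ) • b⟫ := by
    rw [real_inner_self_eq_norm_sq]
  have h2 : ‖a - b‖ ^ 2 = ⟪a - b, a - b⟫ := by rw [real_inner_self_eq_norm_sq]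
  have h3 : ‖a‖ ^ 2 = ⟪a, a⟫ := by rw [real_inner_self_eq_norm_sq]
  have h4 : ‖b‖ ^ 2 = ⟪b, b⟫ := by rw [real_inner_self_eq_norm_sq]
  rw [h1, h2, h3, h4]
  simp only [inner_add_add_self, inner_sub_sub_self, real_inner_smul_left,
    real_inner_smul_right, real_inner_comm a b]
  ring

/-- Remark 3 (abstract form): if the state map satisfies
`‖i(u_{μg₁+(1-μ)g₂})‖ ≤ ‖μ·i(u_{g₁}) + (1-μ)·i(u_{g₂})‖` for all `g₁, g₂` and
`μ ∈ [0,1]`, then the cost functional `J` is strictly convex on `H`, and hence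
the minimizer of `J` over `H` is unique. -/
theorem cost_functional_strictly_convex_of_state_inequality
    {V H : Type*}
    [NormedAddCommGroup V] [InnerProductSpace ℝ V] [CompleteSpace V]
    [NormedAddCommGroup H] [InnerProductSpace ℝ H] [CompleteSpace H]
    (i : V →L[ℝ] H) (hi : ‖i‖ ≤ 1)
    (a : V →L[ℝ] V →L[ℝ] ℝ) (ha_symm : ∀ u v : V, a u v = a v u)
    (V₀ : Submodule ℝ V) (hV₀ : IsClosed (V₀ : Set V))
    (lam : ℝ) (hlam : 0 < lam) (hcoer : ∀ v ∈ V₀, lam * ‖v‖ ^ 2 ≤ a v v)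
    (K : Set V) (hKne : K.Nonempty) (hKcl : IsClosed K) (hKconv : Convex ℝ K)
    (hKdiff : ∀ x ∈ K, ∀ y ∈ K, x - y ∈ V₀)
    (q : V →L[ℝ] ℝ)
    (u : H → V) (hu : ∀ g, u g ∈ K)
    (hVI : ∀ g, ∀ v ∈ K, ⟪g, i (v - u g)⟫ - q (v - u g) ≤ a (u g) (v - u g))
    (M : ℝ) (hM : 0 < M)
    (J : H → ℝ) (hJ : ∀ g, J g = 2⁻¹ * ‖i (u g)‖ ^ 2 + M / 2 * ‖g‖ ^ 2)
    (hstate : ∀ g₁ g₂ : H, ∀ μ ∈ Set.Icc (0 : ℝ) 1,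
      ‖i (u (μ • g₁ + (1 - μ) • g₂))‖ ≤ ‖μ • i (u g₁) + (1 - μ) • i (u g₂)‖) :
    (∀ g₁ g₂ : H, g₁ ≠ g₂ → ∀ μ ∈ Set.Ioo (0 : ℝ) 1,
      J (μ • g₁ + (1 - μ) • g₂) < μ * J g₁ + (1 - μ) * J g₂) ∧
    (∀ g₁ g₂ : H, (∀ g, J g₁ ≤ J g) → (∀ g, J g₂ ≤ J g) → g₁ = g₂) := by
  have hsc : ∀ g₁ g₂ : H, g₁ ≠ g₂ → ∀ μ ∈ Set.Ioo (0 : ℝ) 1,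
      J (μ • g₁ + (1 - μ) • g₂) < μ * J g₁ + (1 - μ) * J g₂ := by
    intro g₁ g₂ hne μ hμ
    obtain ⟨hμ0, hμ1⟩ := hμ
    set g := μ • g₁ + (1 - μ) • g₂ with hg
    -- state term
    have hs := hstate g₁ g₂ μ ⟨le_of_lt hμ0, le_of_lt hμ1⟩
    have hsq : ‖i (u g)‖ ^ 2 ≤ ‖μ • i (u g₁) + (1 - μ) • i (u g₂)‖ ^ 2 := by
      apply pow_le_pow_left₀ (norm_nonneg _) hs
    have hconv1 : ‖μ • i (u g₁) + (1 - μ) • i (u g₂)‖ ^ 2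
        ≤ μ * ‖i (u g₁)‖ ^ 2 + (1 - μ) * ‖i (u g₂)‖ ^ 2 := by
      have := norm_sq_combo_identity (i (u g₁)) (i (u g₂)) μ
      nlinarith [sq_nonneg ‖i (u g₁) - i (u g₂)‖, mul_pos hμ0 (sub_pos.mpr hμ1)]
    have hstrict : ‖g‖ ^ 2 < μ * ‖g₁‖ ^ 2 + (1 - μ) * ‖g₂‖ ^ 2 := by
      have hid := norm_sq_combo_identity g₁ g₂ μ
      have hpos : 0 < ‖g₁ - g₂‖ ^ 2 := by
        have h0 : g₁ - g₂ ≠ 0 := sub_ne_zero.mpr hne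
        exact pow_pos (norm_pos_iff.mpr h0) 2
      nlinarith [mul_pos hμ0 (sub_pos.mpr hμ1)]
    rw [hJ, hJ, hJ]
    nlinarith [hsq.trans hconv1]
  refine ⟨hsc, ?_⟩
  intro g₁ g₂ h1 h2
  by_contra hne
  have hmid := hsc g₁ g₂ hne (2⁻¹ : ℝ) ⟨by norm_num, by norm_num⟩
  have heq : J g₁ = J g₂ := le_antisymm (h1 g₂) (h2 g₁)
  have h3 := h1 ((2⁻¹ : ℝ) • g₁ + (1 - (2⁻¹ : ℝ)) • g₂)
  rw [heq] at h3
  nlinarith [hmid, h3, heq]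
end
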